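/- arXiv:1608.03339 — 2 statements merged into one kernel-verified Lean document; each statement's English description precedes it below -/
import Mathlib

section
/- Assume ∫ y² dρ(x, y) < ∞ and let λ > 0. Define ξ_λ(z) := (y − ⟨f_λ, φ(x)⟩) φ(x) for z = (x, y) ∈ X × ℝ. Then for every sample D of size N partitioned into disjoint subsets D_1, …, D_m, one has the identity f̄_{D,λ} − f_{D,λ} = Σ_{j=1}^m (|D_j|/|D|) [(L_{D_j} + λI)^{−1} − (L_D + λI)^{−1}] Δ_j, where Δ_j := (1/|D_j|) Σ_{z ∈ D_j} ξ_λ(z) − E_{z∼ρ}[ξ_λ]. -/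
open MeasureTheory
open scoped RealInnerProductSpace

/-- The empirical operator `L_D f = (1/|ι|) Σ_i ⟨f, φ(x_i)⟩ φ(x_i)` associated with a sample
`D = ((x_i, y_i))_i` indexed by a finite type `ι`. -/
noncomputable def empiricalOperator {X H : Type*} [NormedAddCommGroup H]
    [InnerProductSpace ℝ H] (φ : X → H) {ι : Type*} [Fintype ι] (D : ι → X × ℝ) :
    H →L[ℝ] H :=
  (Fintype.card ι : ℝ)⁻¹ • ∑ i, (innerSL ℝ (φ (D i).1)).smulRight (φ (D i).1)

/-- The regularized least squares estimator
`f_{D,λ} := (L_D + λI)^{−1}((1/|ι|) Σ_i y_i φ(x_i))`. -/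
noncomputable def rlsEstimator {X H : Type*} [NormedAddCommGroup H]
    [InnerProductSpace ℝ H] (φ : X → H) (lam : ℝ) {ι : Type*} [Fintype ι]
    (D : ι → X × ℝ) : H :=
  Ring.inverse (empiricalOperator φ D + lam • (1 : H →L[ℝ] H))
    ((Fintype.card ι : ℝ)⁻¹ • ∑ i, (D i).2 • φ (D i).1)

/-- The data-free regularized limit `f_λ := (L + λI)^{−1}(∫ y φ(x) dρ)`. -/
noncomputable def fLam {X H : Type*} [MeasurableSpace X] [NormedAddCommGroup H]
    [InnerProductSpace ℝ H] [CompleteSpace H] (ρ : Measure (X × ℝ)) (φ : X → H)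
    (L : H →L[ℝ] H) (lam : ℝ) : H :=
  Ring.inverse (L + lam • (1 : H →L[ℝ] H)) (∫ z, z.2 • φ z.1 ∂ρ)

/-!
Write `A_j = L_{D_j} + λ`, `A = L_D + λ` and `g_j`, `g` for the local and global empirical
targets `(1/|D_j|) Σ y φ(x)`. With the weights `w_j = |D_j|/|D|`, which sum to one, `A` and `g`
are the `w`-averages of the `A_j` and `g_j`. By the definition of `f_λ`, `E[ξ_λ] = λ f_λ`,
so `Δ_j = g_j - A_j f_λ`. Hence `A_j⁻¹ Δ_j = f_{D_j,λ} - f_λ` and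
`A⁻¹ (Σ_j w_j Δ_j) = A⁻¹ (g - A f_λ) = f_{D,λ} - f_λ`; subtracting gives the identity.
-/

theorem isUnit_add_smul_one_of_inner_self_nonneg {H : Type*} [NormedAddCommGroup H]
    [InnerProductSpace ℝ H] [CompleteSpace H] {T : H →L[ℝ] H} (hT : ∀ f, 0 ≤ ⟪T f, f⟫)
    {lam : ℝ} (hlam : 0 < lam) : IsUnit (T + lam • (1 : H →L[ℝ] H)) := by
  have coercive : IsCoercive ((innerSL ℝ).comp (T + lam • 1)) := by
    refine ⟨lam, hlam, fun f => ?_⟩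
    simp only [ContinuousLinearMap.comp_apply, innerSL_apply_apply, add_apply, smul_apply,
      one_apply_eq_self, inner_add_left, real_inner_smul_left, real_inner_self_eq_norm_mul_norm]
    linarith [hT f]
  refine ⟨coercive.continuousLinearEquivOfBilin.toUnit, ?_⟩
  ext f
  refine ext_inner_right ℝ fun w => (coercive.continuousLinearEquivOfBilin_apply f w).trans ?_
  simp [inner_add_left, real_inner_smul_left]

theorem sum_smul_inverse_apply_sub_inverse_apply {𝕜 E J : Type*} [NontriviallyNormedField 𝕜]
    [NormedAddCommGroup E] [NormedSpace 𝕜 E] [Fintype J] {w : J → 𝕜} {A : J → E →L[𝕜] E}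
    {A₀ : E →L[𝕜] E} (hA : ∀ j, IsUnit (A j)) (hA₀ : IsUnit A₀) (hw : ∑ j, w j = 1)
    (hwA : ∑ j, w j • A j = A₀) (g : J → E) (f : E) :
    ∑ j, w j • Ring.inverse (A j) (g j) - Ring.inverse A₀ (∑ j, w j • g j)
      = ∑ j, w j • (Ring.inverse (A j) - Ring.inverse A₀) (g j - A j f) := by
  have inverse_apply_apply {T : E →L[𝕜] E} (hT : IsUnit T) (v : E) : Ring.inverse T (T v) = v :=
    DFunLike.congr_fun (Ring.inverse_mul_cancel T hT) v
  have hwAf : ∑ j, w j • A j f = A₀ f := by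
    rw [← hwA, sum_apply]
    rfl
  calc ∑ j, w j • Ring.inverse (A j) (g j) - Ring.inverse A₀ (∑ j, w j • g j)
      = ∑ j, w j • (Ring.inverse (A j) (g j) - f) - Ring.inverse A₀ (∑ j, w j • g j - A₀ f) := by
        simp only [smul_sub, Finset.sum_sub_distrib, ← Finset.sum_smul, hw, one_smul, map_sub,
          inverse_apply_apply hA₀]
        abel
    _ = ∑ j, w j • (Ring.inverse (A j) - Ring.inverse A₀) (g j - A j f) := by
        simp only [← hwAf, ← Finset.sum_sub_distrib, ← smul_sub, map_sum, map_smul, sub_apply,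
          map_sub, inverse_apply_apply (hA _), sub_sub_sub_comm]

theorem inv_card_smul_sum_sigma {E J : Type*} [AddCommGroup E] [Module ℝ E] [Fintype J]
    {ι : J → Type*} [∀ j, Fintype (ι j)] (v : (Σ j, ι j) → E) :
    (Fintype.card (Σ j, ι j) : ℝ)⁻¹ • ∑ p, v p
      = ∑ j, ((Fintype.card (ι j) : ℝ) / Fintype.card (Σ j, ι j)) •
          ((Fintype.card (ι j) : ℝ)⁻¹ • ∑ i, v ⟨j, i⟩) := by
  rw [Fintype.sum_sigma, Finset.smul_sum]
  refine Finset.sum_congr rfl fun j _ => ?_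
  rcases isEmpty_or_nonempty (ι j) with h | h
  · simp
  · rw [smul_smul]
    congr 1
    field_simp

theorem sum_card_div_card_sigma {J : Type*} [Fintype J] {ι : J → Type*} [∀ j, Fintype (ι j)]
    [Nonempty (Σ j, ι j)] :
    ∑ j, (Fintype.card (ι j) : ℝ) / Fintype.card (Σ j, ι j) = 1 := by
  rw [← Finset.sum_div, div_eq_one_iff_eq (by positivity), Fintype.card_sigma, Nat.cast_sum]

section Empirical

variable {X H : Type*} [NormedAddCommGroup H] [InnerProductSpace ℝ H] (φ : X → H)

theorem empiricalOperator_apply {ι : Type*} [Fintype ι] (D : ι → X × ℝ) (f : H) :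
    empiricalOperator φ D f = (Fintype.card ι : ℝ)⁻¹ • ∑ i, ⟪f, φ (D i).1⟫ • φ (D i).1 := by
  simp [empiricalOperator, real_inner_comm]

theorem inner_empiricalOperator_apply_self_nonneg {ι : Type*} [Fintype ι] (D : ι → X × ℝ)
    (f : H) : 0 ≤ ⟪empiricalOperator φ D f, f⟫ := by
  rw [empiricalOperator_apply, real_inner_smul_left, sum_inner]
  refine mul_nonneg (by positivity) (Finset.sum_nonneg fun i _ => ?_)
  rw [real_inner_smul_left, real_inner_comm]
  exact mul_self_nonneg _

theorem inv_card_smul_sum_residual_smul {ι : Type*} [Fintype ι] (D : ι → X × ℝ) (f : H) :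
    (Fintype.card ι : ℝ)⁻¹ • ∑ i, ((D i).2 - ⟪f, φ (D i).1⟫) • φ (D i).1
      = (Fintype.card ι : ℝ)⁻¹ • ∑ i, (D i).2 • φ (D i).1 - empiricalOperator φ D f := by
  simp only [empiricalOperator_apply, sub_smul, Finset.sum_sub_distrib, smul_sub]

theorem empiricalOperator_sigma {J : Type*} [Fintype J] {ι : J → Type*} [∀ j, Fintype (ι j)]
    (D : (j : J) → ι j → X × ℝ) :
    empiricalOperator φ (fun p : Σ j, ι j => D p.1 p.2)
      = ∑ j, ((Fintype.card (ι j) : ℝ) / Fintype.card (Σ j, ι j)) • empiricalOperator φ (D j) :=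
  inv_card_smul_sum_sigma _

variable [CompleteSpace H]

theorem isUnit_empiricalOperator_add_smul_one {ι : Type*} [Fintype ι] (D : ι → X × ℝ) {lam : ℝ}
    (hlam : 0 < lam) : IsUnit (empiricalOperator φ D + lam • (1 : H →L[ℝ] H)) :=
  isUnit_add_smul_one_of_inner_self_nonneg (inner_empiricalOperator_apply_self_nonneg φ D) hlam

/-- The identity holds with any `f` in place of `f_λ`, once `E[ξ_λ]` is replaced by `λ f`. -/
theorem sum_smul_rlsEstimator_sub_rlsEstimator_sigma {lam : ℝ} (hlam : 0 < lam) {J : Type*}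
    [Fintype J] {ι : J → Type*} [∀ j, Fintype (ι j)] (D : (j : J) → ι j → X × ℝ) (f : H) :
    ∑ j, ((Fintype.card (ι j) : ℝ) / Fintype.card (Σ j, ι j)) • rlsEstimator φ lam (D j)
        - rlsEstimator φ lam (fun p : Σ j, ι j => D p.1 p.2)
      = ∑ j, ((Fintype.card (ι j) : ℝ) / Fintype.card (Σ j, ι j)) •
          ((Ring.inverse (empiricalOperator φ (D j) + lam • (1 : H →L[ℝ] H))
            - Ring.inverse (empiricalOperator φ (fun p : Σ j, ι j => D p.1 p.2)
                + lam • (1 : H →L[ℝ] H)))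
            ((Fintype.card (ι j) : ℝ)⁻¹ • ∑ i, ((D j i).2 - ⟪f, φ (D j i).1⟫) • φ (D j i).1
              - lam • f)) := by
  rcases isEmpty_or_nonempty (Σ j, ι j) with hD | hD
  · simp [rlsEstimator]
  have hwA : ∑ j, ((Fintype.card (ι j) : ℝ) / Fintype.card (Σ j, ι j)) •
      (empiricalOperator φ (D j) + lam • (1 : H →L[ℝ] H))
        = empiricalOperator φ (fun p : Σ j, ι j => D p.1 p.2) + lam • 1 := by
    simp only [smul_add, Finset.sum_add_distrib, ← Finset.sum_smul, sum_card_div_card_sigma,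
      one_smul, empiricalOperator_sigma]
  unfold rlsEstimator
  beta_reduce
  rw [inv_card_smul_sum_sigma (fun p => (D p.1 p.2).2 • φ (D p.1 p.2).1),
    sum_smul_inverse_apply_sub_inverse_apply
      (fun j => isUnit_empiricalOperator_add_smul_one φ (D j) hlam)
      (isUnit_empiricalOperator_add_smul_one φ _ hlam) sum_card_div_card_sigma hwA _ f]
  simp only [inv_card_smul_sum_residual_smul, add_apply, smul_apply, one_apply_eq_self, sub_sub]

end Empirical

section Population

variable {X H : Type*} [MeasurableSpace X] [NormedAddCommGroup H] [InnerProductSpace ℝ H]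
  [MeasurableSpace H] [BorelSpace H] [SecondCountableTopology H]
  {ρ : Measure (X × ℝ)} {φ : X → H}

theorem integrable_inner_smul_comp_fst [IsFiniteMeasure ρ] (hφ : Measurable φ) {κ : ℝ}
    (hκ : ∀ x, ‖φ x‖ ≤ κ) (f : H) : Integrable (fun z : X × ℝ => ⟪f, φ z.1⟫ • φ z.1) ρ := by
  refine .of_bound ((by fun_prop : Continuous fun v : H => ⟪f, v⟫ • v).comp_aestronglyMeasurable
    (hφ.comp measurable_fst).aestronglyMeasurable) (‖f‖ * κ * κ) (ae_of_all _ fun z => ?_)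
  have hκ₀ : 0 ≤ κ := (norm_nonneg _).trans (hκ z.1)
  calc ‖⟪f, φ z.1⟫ • φ z.1‖ ≤ ‖f‖ * ‖φ z.1‖ * ‖φ z.1‖ := by
        rw [norm_smul]; gcongr; exact norm_inner_le_norm _ _
    _ ≤ ‖f‖ * κ * κ := by gcongr <;> exact hκ z.1

theorem integrable_snd_smul_comp_fst [IsFiniteMeasure ρ] (hφ : Measurable φ) {κ : ℝ}
    (hκ : ∀ x, ‖φ x‖ ≤ κ) (hy2 : Integrable (fun z : X × ℝ => z.2 ^ 2) ρ) :
    Integrable (fun z : X × ℝ => z.2 • φ z.1) ρ := by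
  have hy : Integrable (fun z : X × ℝ => z.2) ρ :=
    ((memLp_two_iff_integrable_sq measurable_snd.aestronglyMeasurable).2 hy2).integrable
      one_le_two
  exact hy.smul_bdd κ (hφ.comp measurable_fst).aestronglyMeasurable (ae_of_all _ fun z => hκ z.1)

theorem integral_fst_inner_smul (hφ : Measurable φ) (f : H) :
    ∫ x, ⟪f, φ x⟫ • φ x ∂ρ.fst = ∫ z, ⟪f, φ z.1⟫ • φ z.1 ∂ρ :=
  integral_map measurable_fst.aemeasurable
    ((by fun_prop : Continuous fun v : H => ⟪f, v⟫ • v).comp_aestronglyMeasurable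
      hφ.aestronglyMeasurable)

variable [CompleteSpace H]

theorem inner_apply_self_nonneg_of_eq_integral [IsFiniteMeasure ρ] (hφ : Measurable φ) {κ : ℝ}
    (hκ : ∀ x, ‖φ x‖ ≤ κ) {L : H →L[ℝ] H} (hL : ∀ f, L f = ∫ x, ⟪f, φ x⟫ • φ x ∂ρ.fst) (f : H) :
    0 ≤ ⟪L f, f⟫ := by
  rw [hL, integral_fst_inner_smul hφ, real_inner_comm,
    ← integral_inner (integrable_inner_smul_comp_fst hφ hκ f)]
  refine integral_nonneg fun z => ?_
  rw [real_inner_smul_right]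
  exact mul_self_nonneg _

theorem integral_residual_smul_eq [IsFiniteMeasure ρ] (hφ : Measurable φ) {κ : ℝ}
    (hκ : ∀ x, ‖φ x‖ ≤ κ) (hy2 : Integrable (fun z : X × ℝ => z.2 ^ 2) ρ) {L : H →L[ℝ] H}
    (hL : ∀ f, L f = ∫ x, ⟪f, φ x⟫ • φ x ∂ρ.fst) {lam : ℝ}
    (hUL : IsUnit (L + lam • (1 : H →L[ℝ] H))) :
    ∫ z, (z.2 - ⟪fLam ρ φ L lam, φ z.1⟫) • φ z.1 ∂ρ = lam • fLam ρ φ L lam := by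
  have hfLam : L (fLam ρ φ L lam) + lam • fLam ρ φ L lam = ∫ z, z.2 • φ z.1 ∂ρ :=
    DFunLike.congr_fun (Ring.mul_inverse_cancel _ hUL) _
  simp only [sub_smul]
  rw [integral_sub (integrable_snd_smul_comp_fst hφ hκ hy2)
    (integrable_inner_smul_comp_fst hφ hκ _), ← integral_fst_inner_smul hφ, ← hL, ← hfLam,
    add_sub_cancel_left]

end Population

theorem distributed_difference_representation_general
    {X H : Type*} [MeasurableSpace X]
    [NormedAddCommGroup H] [InnerProductSpace ℝ H] [CompleteSpace H]
    [SecondCountableTopology H] [MeasurableSpace H] [BorelSpace H]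
    (ρ : Measure (X × ℝ)) [IsProbabilityMeasure ρ]
    (φ : X → H) (hφ : Measurable φ) (κ : ℝ) (hκ : ∀ x, ‖φ x‖ ≤ κ)
    (L : H →L[ℝ] H) (hL : ∀ f, L f = ∫ x, ⟪f, φ x⟫ • φ x ∂ρ.fst)
    (hy2 : Integrable (fun z : X × ℝ => z.2 ^ 2) ρ)
    (lam : ℝ) (hlam : 0 < lam)
    (m : ℕ) (k : Fin m → ℕ)
    (D : (j : Fin m) → Fin (k j) → X × ℝ) :
    (∑ j, ((k j : ℝ) / ((∑ j', k j' : ℕ) : ℝ)) • rlsEstimator φ lam (D j))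
        - rlsEstimator φ lam (fun p : (j : Fin m) × Fin (k j) => D p.1 p.2)
      = ∑ j, ((k j : ℝ) / ((∑ j', k j' : ℕ) : ℝ)) •
          ((Ring.inverse (empiricalOperator φ (D j) + lam • (1 : H →L[ℝ] H))
            - Ring.inverse
                (empiricalOperator φ (fun p : (j : Fin m) × Fin (k j) => D p.1 p.2)
                  + lam • (1 : H →L[ℝ] H)))
            ((k j : ℝ)⁻¹ • (∑ i, ((D j i).2 - ⟪fLam ρ φ L lam, φ (D j i).1⟫) • φ (D j i).1)
              - ∫ z : X × ℝ, (z.2 - ⟪fLam ρ φ L lam, φ z.1⟫) • φ z.1 ∂ρ)) := by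
  have hUL : IsUnit (L + lam • (1 : H →L[ℝ] H)) :=
    isUnit_add_smul_one_of_inner_self_nonneg (inner_apply_self_nonneg_of_eq_integral hφ hκ hL) hlam
  rw [integral_residual_smul_eq hφ hκ hy2 hL hUL]
  simpa only [Fintype.card_fin, Fintype.card_sigma] using
    sum_smul_rlsEstimator_sub_rlsEstimator_sigma φ hlam D (fLam ρ φ L lam)

/-- **Representation of the distributed–global difference.**
Assume `∫ y² dρ < ∞` and `λ > 0`, and set `ξ_λ(z) := (y − ⟨f_λ, φ(x)⟩) φ(x)`.  For every
sample `D` of size `N` partitioned into disjoint subsets `D_1, …, D_m` (here of sizes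
`k 1, …, k m`, the full sample being indexed by the sigma type `(j : Fin m) × Fin (k j)`),
the distributed estimator `f̄_{D,λ} := Σ_j (|D_j|/|D|) f_{D_j,λ}` satisfies
`f̄_{D,λ} − f_{D,λ} = Σ_j (|D_j|/|D|) [(L_{D_j} + λI)^{−1} − (L_D + λI)^{−1}] Δ_j`, where
`Δ_j := (1/|D_j|) Σ_{z ∈ D_j} ξ_λ(z) − E[ξ_λ]`. -/
theorem distributed_difference_representation
    {X H : Type*} [MeasurableSpace X] [StandardBorelSpace X]
    [NormedAddCommGroup H] [InnerProductSpace ℝ H] [CompleteSpace H]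
    [SecondCountableTopology H] [MeasurableSpace H] [BorelSpace H]
    (ρ : Measure (X × ℝ)) [IsProbabilityMeasure ρ]
    (φ : X → H) (hφ : Measurable φ) (κ : ℝ) (hκ : ∀ x, ‖φ x‖ ≤ κ)
    (L : H →L[ℝ] H) (hL : ∀ f, L f = ∫ x, ⟪f, φ x⟫ • φ x ∂ρ.fst)
    (hy2 : Integrable (fun z : X × ℝ => z.2 ^ 2) ρ)
    (lam : ℝ) (hlam : 0 < lam)
    (m : ℕ) (k : Fin m → ℕ) (hk : ∀ j, 0 < k j)
    (D : (j : Fin m) → Fin (k j) → X × ℝ) :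
    (∑ j, ((k j : ℝ) / ((∑ j', k j' : ℕ) : ℝ)) • rlsEstimator φ lam (D j))
        - rlsEstimator φ lam (fun p : (j : Fin m) × Fin (k j) => D p.1 p.2)
      = ∑ j, ((k j : ℝ) / ((∑ j', k j' : ℕ) : ℝ)) •
          ((Ring.inverse (empiricalOperator φ (D j) + lam • (1 : H →L[ℝ] H))
            - Ring.inverse
                (empiricalOperator φ (fun p : (j : Fin m) × Fin (k j) => D p.1 p.2)
                  + lam • (1 : H →L[ℝ] H)))
            ((k j : ℝ)⁻¹ • (∑ i, ((D j i).2 - ⟪fLam ρ φ L lam, φ (D j i).1⟫) • φ (D j i).1)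
              - ∫ z : X × ℝ, (z.2 - ⟪fLam ρ φ L lam, φ z.1⟫) • φ z.1 ∂ρ)) :=
  distributed_difference_representation_general ρ φ hφ κ hκ L hL hy2 lam hlam m k D
end

section
/- Assume the source condition f_ρ = T^r g_ρ holds for some g_ρ ∈ L²(ρ_X) and some 1/2 ≤ r ≤ 1, and for λ > 0 set f_λ := (T + λI)^{−1} T f_ρ ∈ L²(ρ_X). Then f_ρ − f_λ = T^{1/2} h with h := λ (T + λI)^{−1} T^{r−1/2} g_ρ, and ‖h‖_{L²(ρ_X)} ≤ λ^{r−1/2} ‖g_ρ‖_{L²(ρ_X)} (that is, the RKHS norm of f_λ − f_ρ satisfies ‖f_λ − f_ρ‖_K ≤ λ^{r−1/2} ‖g_ρ‖_{L²(ρ_X)}). -/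
/-!
All operators involved are diagonal in the eigenbasis `c` of `T`, so both claims reduce to
identities and inequalities between coefficients. In the `ℓ`-th coefficient, `f_ρ − f_λ` has
`λ μ^r g / (μ + λ) = μ^{1/2} · h_ℓ` with `h_ℓ = λ μ^{r-1/2} g / (μ + λ)`, and the multiplier
`λ μ^s / (μ + λ)`, `s = r - 1/2 ∈ [0, 1]`, is at most `λ^s` by weighted AM–GM:
`μ^s λ^{1-s} ≤ s μ + (1 - s) λ ≤ μ + λ`.
-/

open MeasureTheory
open scoped RealInnerProductSpace

lemma Real.mul_rpow_le_rpow_mul_add {a b s : ℝ} (ha : 0 ≤ a) (hb : 0 ≤ b) (hs0 : 0 ≤ s)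
    (hs1 : s ≤ 1) : b * a ^ s ≤ b ^ s * (a + b) := by
  have hsplit : b = b ^ s * b ^ (1 - s) := by
    rw [← Real.rpow_add' hb (by norm_num), add_sub_cancel, Real.rpow_one]
  have hmean : a ^ s * b ^ (1 - s) ≤ a + b :=
    (Real.geom_mean_le_arith_mean2_weighted hs0 (by linarith) ha hb (by ring)).trans
      (by nlinarith)
  calc b * a ^ s = b ^ s * (a ^ s * b ^ (1 - s)) := by nth_rw 1 [hsplit]; ring
    _ ≤ b ^ s * (a + b) := by gcongr

section

variable {E : Type*} [NormedAddCommGroup E] [InnerProductSpace ℝ E]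

lemma ContinuousLinearMap.isUnit_add_smul_one [CompleteSpace E] {T : E →L[ℝ] E}
    (hT : ∀ x, 0 ≤ ⟪T x, x⟫) {t : ℝ} (ht : 0 < t) : IsUnit (T + t • 1) := by
  refine isUnit_of_forall_le_norm_inner_map _ (c := ⟨t, ht.le⟩) ht fun x => ?_
  have hx : ⟪(T + t • 1) x, x⟫ = ⟪T x, x⟫ + ‖x‖ ^ 2 * t := by
    simp [inner_add_left, real_inner_smul_left, mul_comm]
  calc ‖x‖ ^ 2 * t ≤ ⟪(T + t • 1) x, x⟫ := by rw [hx]; linarith [hT x]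
    _ ≤ ‖⟪(T + t • 1) x, x⟫‖ := Real.le_norm_self _

namespace HilbertBasis

variable {ι : Type*} (c : HilbertBasis ι ℝ E)

lemma ext_of_inner_eq {v w : E} (h : ∀ i, ⟪c i, v⟫ = ⟪c i, w⟫) : v = w :=
  c.repr.injective <| lp.ext <| funext fun i => by simp only [c.repr_apply_apply, h]

lemma norm_le_of_abs_inner_le {v w : E} {C : ℝ} (hC : 0 ≤ C)
    (h : ∀ i, |⟪c i, v⟫| ≤ C * |⟪c i, w⟫|) : ‖v‖ ≤ C * ‖w‖ := by
  rw [← c.repr.norm_map v, ← c.repr.norm_map w, ← abs_of_nonneg hC, ← Real.norm_eq_abs,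
    ← norm_smul]
  refine lp.norm_mono two_ne_zero fun i => ?_
  simpa [c.repr_apply_apply, abs_mul, abs_of_nonneg hC] using h i

variable {c} {D : E →L[ℝ] E} {d : ι → ℝ}

lemma inner_apply_of_apply_eq_smul (hD : ∀ j, D (c j) = d j • c j) (i : ι) (v : E) :
    ⟪c i, D v⟫ = d i * ⟪c i, v⟫ := by
  classical
  have hsum : HasSum (fun j => c.repr v j * d j * ⟪c i, c j⟫) ⟪c i, D v⟫ := by
    simpa [hD, real_inner_smul_right, mul_comm, mul_left_comm, mul_assoc] using
      (c.hasSum_repr v).mapL ((innerSL ℝ (c i)).comp D)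
  refine hsum.unique ?_
  convert hasSum_ite_eq i (d i * ⟪c i, v⟫) using 1
  ext j
  split_ifs with h
  · subst h; simp [c.repr_apply_apply, c.orthonormal.1 j, mul_comm]
  · simp [c.orthonormal.2 (Ne.symm h)]

lemma inner_apply_self_nonneg_of_apply_eq_smul (hD : ∀ j, D (c j) = d j • c j)
    (hd : ∀ j, 0 ≤ d j) (v : E) : 0 ≤ ⟪D v, v⟫ := by
  rw [← c.tsum_inner_mul_inner]
  refine tsum_nonneg fun i => ?_
  rw [real_inner_comm (c i), inner_apply_of_apply_eq_smul hD, mul_assoc]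
  exact mul_nonneg (hd i) (mul_self_nonneg _)

lemma ringInverse_apply_of_apply_eq_smul (hD : ∀ j, D (c j) = d j • c j) (hu : IsUnit D)
    (i : ι) : Ring.inverse D (c i) = (d i)⁻¹ • c i := by
  have hleft (v : E) : Ring.inverse D (D v) = v := by
    simpa using DFunLike.congr_fun (Ring.inverse_mul_cancel D hu) v
  have hdi : d i ≠ 0 := by
    rintro h0
    apply c.orthonormal.ne_zero i
    rw [← hleft (c i), hD, h0, zero_smul, map_zero]
  rw [← hleft ((d i)⁻¹ • c i), map_smul, hD, smul_smul, inv_mul_cancel₀ hdi, one_smul]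

end HilbertBasis

end

open HilbertBasis

theorem approximation_error_RKHS_bound_general
    {X : Type*} [MeasurableSpace X]
    (ρ : Measure (X × ℝ))
    (T : Lp ℝ 2 ρ.fst →L[ℝ] Lp ℝ 2 ρ.fst)
    (c : HilbertBasis ℕ ℝ (Lp ℝ 2 ρ.fst)) (μ : ℕ → ℝ) (hμ : ∀ ℓ, 0 ≤ μ ℓ)
    (hTc : ∀ ℓ, T (c ℓ) = μ ℓ • c ℓ)
    (Tpow : ℝ → (Lp ℝ 2 ρ.fst →L[ℝ] Lp ℝ 2 ρ.fst))
    (hTpow : ∀ r : ℝ, 0 < r → ∀ ℓ, Tpow r (c ℓ) = (μ ℓ ^ r) • c ℓ)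
    (hTpow0 : Tpow 0 = 1)
    (fρ : Lp ℝ 2 ρ.fst)
    (r : ℝ) (hr0 : 1 / 2 ≤ r) (hr1 : r ≤ 1)
    (gρ : Lp ℝ 2 ρ.fst) (hsource : fρ = Tpow r gρ)
    (lam : ℝ) (hlam : 0 < lam) :
    fρ - Ring.inverse (T + lam • (1 : Lp ℝ 2 ρ.fst →L[ℝ] Lp ℝ 2 ρ.fst)) (T fρ)
        = Tpow (1 / 2)
            (lam • Ring.inverse (T + lam • (1 : Lp ℝ 2 ρ.fst →L[ℝ] Lp ℝ 2 ρ.fst))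
              (Tpow (r - 1 / 2) gρ)) ∧
    ‖lam • Ring.inverse (T + lam • (1 : Lp ℝ 2 ρ.fst →L[ℝ] Lp ℝ 2 ρ.fst))
        (Tpow (r - 1 / 2) gρ)‖
      ≤ lam ^ (r - 1 / 2) * ‖gρ‖ := by
  subst hsource
  set A := T + lam • (1 : Lp ℝ 2 ρ.fst →L[ℝ] Lp ℝ 2 ρ.fst)
  have hAc (ℓ : ℕ) : A (c ℓ) = (μ ℓ + lam) • c ℓ := by simp [A, hTc, add_smul]
  have hA : IsUnit A := ContinuousLinearMap.isUnit_add_smul_one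
    (inner_apply_self_nonneg_of_apply_eq_smul hTc hμ) hlam
  have hAinv := ringInverse_apply_of_apply_eq_smul hAc hA
  have hpow (s : ℝ) (hs : 0 ≤ s) (ℓ : ℕ) : Tpow s (c ℓ) = μ ℓ ^ s • c ℓ := by
    rcases hs.eq_or_lt with rfl | hs
    · simp [hTpow0]
    · exact hTpow s hs ℓ
  have hs : 0 ≤ r - 1 / 2 := by linarith
  have hcoeff (ℓ : ℕ) : ⟪c ℓ, lam • Ring.inverse A (Tpow (r - 1 / 2) gρ)⟫
      = lam * μ ℓ ^ (r - 1 / 2) / (μ ℓ + lam) * ⟪c ℓ, gρ⟫ := by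
    rw [real_inner_smul_right, inner_apply_of_apply_eq_smul hAinv,
      inner_apply_of_apply_eq_smul (hpow _ hs)]
    ring
  refine ⟨c.ext_of_inner_eq fun ℓ => ?_, c.norm_le_of_abs_inner_le (by positivity) fun ℓ => ?_⟩
  · have hsplit : μ ℓ ^ (1 / 2 : ℝ) * μ ℓ ^ (r - 1 / 2) = μ ℓ ^ r := by
      rw [← Real.rpow_add' (hμ ℓ) (by linarith), add_sub_cancel]
    have hne : μ ℓ + lam ≠ 0 := by linarith [hμ ℓ]
    rw [inner_apply_of_apply_eq_smul (hpow _ (by norm_num)), hcoeff, inner_sub_right,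
      inner_apply_of_apply_eq_smul hAinv, inner_apply_of_apply_eq_smul hTc,
      inner_apply_of_apply_eq_smul (hpow r (by linarith)), ← hsplit]
    field_simp
    ring
  · have hfactor : lam * μ ℓ ^ (r - 1 / 2) / (μ ℓ + lam) ≤ lam ^ (r - 1 / 2) := by
      rw [div_le_iff₀ (by linarith [hμ ℓ])]
      exact Real.mul_rpow_le_rpow_mul_add (hμ ℓ) hlam.le hs (by linarith)
    rw [hcoeff, abs_mul, abs_of_nonneg (by have := hμ ℓ; positivity)]
    exact mul_le_mul_of_nonneg_right hfactor (abs_nonneg _)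

/-- **Approximation error bound in the RKHS norm under the source condition (Lemma 13, (25)).**
Let `T` be the integral operator on `L²(ρ_X)` with kernel `⟨φ(x), φ(x')⟩`, diagonalized by a
Hilbert basis `c` with nonnegative eigenvalues `μ`, and let `Tpow r` be its `r`-th power
(defined spectrally, with `Tpow 0 = I`).  Assume the source condition `f_ρ = T^r g_ρ` for
some `g_ρ ∈ L²(ρ_X)` and `1/2 ≤ r ≤ 1`, and for `λ > 0` set `f_λ := (T + λI)^{−1} T f_ρ`.
Then `f_ρ − f_λ = T^{1/2} h` with `h := λ (T + λI)^{−1} T^{r−1/2} g_ρ`, and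
`‖h‖_{L²(ρ_X)} ≤ λ^{r−1/2} ‖g_ρ‖_{L²(ρ_X)}`; that is, the RKHS norm of `f_λ − f_ρ`
satisfies `‖f_λ − f_ρ‖_K ≤ λ^{r−1/2} ‖g_ρ‖_{L²(ρ_X)}`. -/
theorem approximation_error_RKHS_bound
    {X H : Type*} [MeasurableSpace X] [StandardBorelSpace X]
    [NormedAddCommGroup H] [InnerProductSpace ℝ H] [CompleteSpace H]
    [SecondCountableTopology H] [MeasurableSpace H] [BorelSpace H]
    (ρ : Measure (X × ℝ)) [IsProbabilityMeasure ρ]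
    (φ : X → H) (hφ : Measurable φ) (κ : ℝ) (hκ : ∀ x, ‖φ x‖ ≤ κ)
    (hy2 : Integrable (fun z : X × ℝ => z.2 ^ 2) ρ)
    (T : Lp ℝ 2 ρ.fst →L[ℝ] Lp ℝ 2 ρ.fst)
    (hT : ∀ g : Lp ℝ 2 ρ.fst,
      T g =ᵐ[ρ.fst] fun x => ∫ x', ⟪φ x, φ x'⟫ * g x' ∂ρ.fst)
    (c : HilbertBasis ℕ ℝ (Lp ℝ 2 ρ.fst)) (μ : ℕ → ℝ) (hμ : ∀ ℓ, 0 ≤ μ ℓ)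
    (hTc : ∀ ℓ, T (c ℓ) = μ ℓ • c ℓ)
    (Tpow : ℝ → (Lp ℝ 2 ρ.fst →L[ℝ] Lp ℝ 2 ρ.fst))
    (hTpow : ∀ r : ℝ, 0 < r → ∀ ℓ, Tpow r (c ℓ) = (μ ℓ ^ r) • c ℓ)
    (hTpow0 : Tpow 0 = 1)
    (fρ : Lp ℝ 2 ρ.fst)
    (hfρ : ∀ A : Set X, MeasurableSet A →
      ∫ z in A ×ˢ (Set.univ : Set ℝ), z.2 ∂ρ = ∫ x in A, fρ x ∂ρ.fst)
    (r : ℝ) (hr0 : 1 / 2 ≤ r) (hr1 : r ≤ 1)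
    (gρ : Lp ℝ 2 ρ.fst) (hsource : fρ = Tpow r gρ)
    (lam : ℝ) (hlam : 0 < lam) :
    fρ - Ring.inverse (T + lam • (1 : Lp ℝ 2 ρ.fst →L[ℝ] Lp ℝ 2 ρ.fst)) (T fρ)
        = Tpow (1 / 2)
            (lam • Ring.inverse (T + lam • (1 : Lp ℝ 2 ρ.fst →L[ℝ] Lp ℝ 2 ρ.fst))
              (Tpow (r - 1 / 2) gρ)) ∧
    ‖lam • Ring.inverse (T + lam • (1 : Lp ℝ 2 ρ.fst →L[ℝ] Lp ℝ 2 ρ.fst))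
        (Tpow (r - 1 / 2) gρ)‖
      ≤ lam ^ (r - 1 / 2) * ‖gρ‖ :=
  approximation_error_RKHS_bound_general ρ T c μ hμ hTc Tpow hTpow hTpow0 fρ r hr0 hr1 gρ hsource
    lam hlam
end
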